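/- arXiv:1809.07478 — 3 statements merged into one kernel-verified Lean document; each statement's English description precedes it below -/
import Mathlib

section
/- Let q, k, r be distinct primes with q ≡ 3 (mod 4) and k ≡ r ≡ 1 (mod 4). Then the extension Q(√q, √k, √r) / Q(√q, √(kr)) is unramified at every finite prime; in particular, every prime ideal of the ring of integers of Q(√q, √(kr)) is unramified in Q(√q, √k, √r). -/
/-!
Put `K = ℚ(√q, √(kr))` and `M = K(√k, √r)`. Since `√k √r = √(kr) ∈ K`, `M = K(√k) = K(√r)`.
As `k ≡ 1 (mod 4)`, `θ = (1 + √k) / 2` is an algebraic integer generating `M/K` and a root of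
`f = X² - X - (k - 1) / 4`, with `f'(θ) = √k`. As `f` is a multiple of the minimal polynomial of
`θ` over `𝓞 K`, `f'(θ)` is a multiple of `(minpoly θ)'(θ)`, which lies in the different of `M/K`;
so `√k`, hence `k`, lies in the different. Likewise `r` does, and as `k` and `r` are coprime the
different is the unit ideal, so no prime of `K` ramifies in `M`.
-/

open IntermediateField NumberField Polynomial

/-- An extension `M/K` of number fields (inside `ℂ`) is unramified at every
finite prime: every nonzero prime (i.e. maximal) ideal of `𝓞 K` has
ramification index `1` at every prime of `𝓞 M` above it. -/
def UnramifiedAllFinitePrimes (K : IntermediateField ℚ ℂ)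
    (M : IntermediateField K ℂ) : Prop :=
  ∀ p : Ideal (𝓞 K), p.IsMaximal → ∀ P : Ideal (𝓞 M), P.IsMaximal →
    Ideal.comap (algebraMap (𝓞 K) (𝓞 M)) P = p →
    Ideal.ramificationIdx' p P = 1

namespace Ideal

theorem eq_top_of_isCoprime_of_mem {R : Type*} [CommRing R] {I : Ideal R} {x y : R}
    (h : IsCoprime x y) (hx : x ∈ I) (hy : y ∈ I) : I = ⊤ := by
  obtain ⟨u, v, huv⟩ := h
  exact (eq_top_iff_one I).mpr (huv ▸ add_mem (I.mul_mem_left u hx) (I.mul_mem_left v hy))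

section Different

attribute [local instance] FractionRing.liftAlgebra

variable {A B : Type*} [CommRing A] [CommRing B] [Algebra A B] [IsDedekindDomain A]
  [IsDedekindDomain B] [Module.IsTorsionFree A B] [Module.Finite A B]
  [Algebra.IsSeparable (FractionRing A) (FractionRing B)]

theorem ramificationIdx'_eq_one_of_not_dvd_differentIdeal {p : Ideal A} [p.IsMaximal]
    {P : Ideal B} (hp : p ≠ ⊥) (hpP : p.map (algebraMap A B) ≤ P)
    (hP : ¬ P ∣ differentIdeal A B) : p.ramificationIdx' P = 1 := by
  by_contra h
  rw [← ne_eq, ramificationIdx'_ne_one_iff hpP] at h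
  exact hP (by simpa using pow_sub_one_dvd_differentIdeal A P 2 hp (dvd_iff_le.mpr h))

end Different

end Ideal

namespace IntermediateField

theorem adjoin_pair_eq_adjoin_simple_of_mul_mem {F E : Type*} [Field F] [Field E] [Algebra F E]
    {a b : E} (ha : a ≠ 0) (hab : a * b ∈ (⊥ : IntermediateField F E)) : F⟮a, b⟯ = F⟮a⟯ := by
  refine le_antisymm (adjoin_le_iff.mpr ?_) (adjoin.mono _ _ _ (by simp))
  have hb : b = a * b / a := by field_simp
  rintro x (rfl | rfl)
  · exact mem_adjoin_simple_self F x
  · rw [hb]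
    exact div_mem (bot_le (a := F⟮a⟯) hab) (mem_adjoin_simple_self F a)

theorem numberField_adjoin {K E : Type*} [Field K] [NumberField K] [Field E] [Algebra K E]
    {S : Set E} [Finite S] (hS : ∀ x ∈ S, IsIntegral K x) : NumberField (adjoin K S) :=
  have := finiteDimensional_adjoin hS
  .of_module_finite K _

end IntermediateField

namespace Complex

theorem ofReal_sqrt_natCast_sq (n : ℕ) : ((√n : ℝ) : ℂ) ^ 2 = n := by
  rw [← ofReal_pow, Real.sq_sqrt n.cast_nonneg, ofReal_natCast]

theorem isIntegral_ofReal_sqrt_natCast (R : Type*) [CommRing R] [Algebra R ℂ] (n : ℕ) :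
    IsIntegral R ((√n : ℝ) : ℂ) :=
  .of_pow two_pos (by rw [ofReal_sqrt_natCast_sq]; exact isIntegral_natCast n)

end Complex

section NumberField

variable {K L : Type*} [Field K] [Field L] [NumberField K] [NumberField L] [Algebra K L]

theorem aeval_derivative_mem_differentIdeal_of_aeval_eq_zero {x : 𝓞 L} (hx : K⟮(x : L)⟯ = ⊤)
    {g : (𝓞 K)[X]} (hg : aeval x g = 0) :
    aeval x (derivative g) ∈ differentIdeal (𝓞 K) (𝓞 L) := by
  obtain ⟨h, rfl⟩ := minpoly.isIntegrallyClosed_dvd (Algebra.IsIntegral.isIntegral x) hg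
  rw [derivative_mul, map_add, map_mul, map_mul, minpoly.aeval, zero_mul, add_zero]
  exact Ideal.mul_mem_right _ _ <| aeval_derivative_mem_differentIdeal (𝓞 K) K L x <|
    (adjoin_simple_eq_top_iff_of_isAlgebraic (Algebra.IsAlgebraic.isAlgebraic _)).mp hx

theorem mem_differentIdeal_of_sq_eq_one_add_four_mul {x : 𝓞 L} (hx : K⟮(x : L)⟯ = ⊤)
    {c : 𝓞 K} (hc : x ^ 2 = 1 + 4 * algebraMap (𝓞 K) (𝓞 L) c) :
    x ∈ differentIdeal (𝓞 K) (𝓞 L) := by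
  set c' := algebraMap (𝓞 K) (𝓞 L) c
  obtain ⟨y, hy⟩ : ∃ y : 𝓞 L, (y : L) = (1 + x) / 2 := by
    refine IsIntegrallyClosed.isIntegral_iff.mp ⟨X ^ 2 - X - C c', by monicity!, ?_⟩
    rw [← aeval_def]
    simp only [map_sub, map_pow, aeval_X, aeval_C]
    have hcL := congrArg (algebraMap (𝓞 L) L) hc
    simp only [map_pow, map_add, map_mul, map_one, map_ofNat] at hcL
    linear_combination hcL / 4
  have hxy : x = 2 * y - 1 := by
    apply RingOfIntegers.coe_injective
    simp only [RingOfIntegers.coe_eq_algebraMap, map_sub, map_mul, map_ofNat, map_one] at hy ⊢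
    rw [hy]
    ring
  have hroot : aeval y (X ^ 2 - X - C c) = 0 := by
    have h4 : (4 : 𝓞 L) * (y ^ 2 - y - c') = 0 := by
      linear_combination hc - (x + 2 * y - 1) * hxy
    simpa [c'] using (mul_eq_zero.mp h4).resolve_left (by norm_num)
  have hgen : K⟮(y : L)⟯ = ⊤ := by
    refine eq_top_iff.mpr (hx ▸ adjoin_simple_le_iff.mpr ?_)
    rw [hxy]
    push_cast
    exact sub_mem (mul_mem (ofNat_mem _ 2) (mem_adjoin_simple_self K _)) (one_mem _)
  simpa [hxy, one_add_one_eq_two, map_ofNat] using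
    aeval_derivative_mem_differentIdeal_of_aeval_eq_zero hgen hroot

end NumberField

theorem unramifiedAllFinitePrimes_of_differentIdeal_eq_top {K : IntermediateField ℚ ℂ}
    {M : IntermediateField K ℂ} [NumberField K] [NumberField M]
    (h : differentIdeal (𝓞 K) (𝓞 M) = ⊤) : UnramifiedAllFinitePrimes K M := by
  rintro p hp P hP rfl
  refine Ideal.ramificationIdx'_eq_one_of_not_dvd_differentIdeal ?_ Ideal.map_comap_le ?_
  · exact Ring.ne_bot_of_isMaximal_of_not_isField hp (RingOfIntegers.not_isField K)
  · rw [h, Ideal.dvd_iff_le, top_le_iff]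
    exact hP.ne_top

theorem exists_sq_eq_natCast_mem_differentIdeal {K : IntermediateField ℚ ℂ}
    {M : IntermediateField K ℂ} [NumberField K] [NumberField M] {a b : ℂ} {m : ℕ}
    (hm : m % 4 = 1) (ha : a ^ 2 = m) (hab : a * b ∈ K) (hM : K⟮a, b⟯ = M) :
    ∃ x : 𝓞 M, x ^ 2 = m ∧ x ∈ differentIdeal (𝓞 K) (𝓞 M) := by
  have ha0 : a ≠ 0 := by
    rintro rfl
    have : m = 0 := by exact_mod_cast ha.symm.trans (zero_pow two_ne_zero)
    omega
  have haM : a ∈ M := hM ▸ subset_adjoin _ _ (Set.mem_insert a {b})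
  set a' : M := ⟨a, haM⟩
  have ha' : a' ^ 2 = m := Subtype.ext (by simpa using ha)
  have hgen : K⟮a'⟯ = ⊤ := by
    apply lift_injective M
    rw [lift_adjoin_simple, lift_top]
    exact (adjoin_pair_eq_adjoin_simple_of_mul_mem ha0 ⟨⟨a * b, hab⟩, rfl⟩).symm.trans hM
  let x : 𝓞 M := ⟨a', .of_pow two_pos (ha' ▸ isIntegral_natCast m)⟩
  have hx : x ^ 2 = m := RingOfIntegers.ext (by simp only [map_pow, map_natCast]; exact ha')
  refine ⟨x, hx, mem_differentIdeal_of_sq_eq_one_add_four_mul hgen (c := (m / 4 : ℕ)) ?_⟩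
  rw [hx, map_natCast]
  exact_mod_cast (by omega : m = 1 + 4 * (m / 4))

theorem stmt6_general (q k r : ℕ) (hk : k.Prime) (hr : r.Prime)
    (hkr : k ≠ r)
    (hk4 : k % 4 = 1) (hr4 : r % 4 = 1) :
    UnramifiedAllFinitePrimes
      (IntermediateField.adjoin ℚ
        {((Real.sqrt q : ℝ) : ℂ), ((Real.sqrt (k * r) : ℝ) : ℂ)})
      (IntermediateField.adjoin
        (IntermediateField.adjoin ℚ
          {((Real.sqrt q : ℝ) : ℂ), ((Real.sqrt (k * r) : ℝ) : ℂ)})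
        {((Real.sqrt k : ℝ) : ℂ), ((Real.sqrt r : ℝ) : ℂ)}) := by
  set K := adjoin ℚ {((√q : ℝ) : ℂ), ((√(k * r) : ℝ) : ℂ)}
  have : NumberField K :=
    numberField_adjoin (by simp [← Nat.cast_mul, Complex.isIntegral_ofReal_sqrt_natCast])
  have : NumberField (adjoin K {((√k : ℝ) : ℂ), ((√r : ℝ) : ℂ)}) :=
    numberField_adjoin (by simp [Complex.isIntegral_ofReal_sqrt_natCast])
  have hkrK : ((√k : ℝ) : ℂ) * ((√r : ℝ) : ℂ) ∈ K := by
    rw [← Complex.ofReal_mul, ← Real.sqrt_mul k.cast_nonneg]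
    exact subset_adjoin _ _ (by simp)
  obtain ⟨x, hx, hxD⟩ := exists_sq_eq_natCast_mem_differentIdeal hk4
    (Complex.ofReal_sqrt_natCast_sq k) hkrK rfl
  obtain ⟨y, hy, hyD⟩ := exists_sq_eq_natCast_mem_differentIdeal hr4
    (Complex.ofReal_sqrt_natCast_sq r) (mul_comm ((√k : ℝ) : ℂ) _ ▸ hkrK)
    (by rw [Set.pair_comm])
  refine unramifiedAllFinitePrimes_of_differentIdeal_eq_top <| Ideal.eq_top_of_isCoprime_of_mem
    ((Nat.coprime_primes hk hr).mpr hkr).cast ?_ ?_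
  · exact hx ▸ Ideal.pow_mem_of_mem _ hxD 2 two_pos
  · exact hy ▸ Ideal.pow_mem_of_mem _ hyD 2 two_pos

/-- For distinct primes `q ≡ 3 (mod 4)`, `k ≡ r ≡ 1 (mod 4)`, the extension
`ℚ(√q, √k, √r) / ℚ(√q, √(kr))` is unramified at every finite prime. -/
theorem stmt6 (q k r : ℕ) (hq : q.Prime) (hk : k.Prime) (hr : r.Prime)
    (hqk : q ≠ k) (hqr : q ≠ r) (hkr : k ≠ r)
    (hq4 : q % 4 = 3) (hk4 : k % 4 = 1) (hr4 : r % 4 = 1) :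
    UnramifiedAllFinitePrimes
      (IntermediateField.adjoin ℚ
        {((Real.sqrt q : ℝ) : ℂ), ((Real.sqrt (k * r) : ℝ) : ℂ)})
      (IntermediateField.adjoin
        (IntermediateField.adjoin ℚ
          {((Real.sqrt q : ℝ) : ℂ), ((Real.sqrt (k * r) : ℝ) : ℂ)})
        {((Real.sqrt k : ℝ) : ℂ), ((Real.sqrt r : ℝ) : ℂ)}) :=
  stmt6_general q k r hk hr hkr hk4 hr4
end

section
/- For every prime p ≥ 5, there exists a prime q < p such that q ≡ 3 (mod 4) and q is a quadratic nonresidue modulo p, i.e., the Legendre symbol (q/p) = -1. -/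
/-!
If `p ≡ 3 (mod 4)`, the number `p - 4 ≡ 3 (mod 4)` has a prime factor `q ≡ 3 (mod 4)`, and since
`p ≡ 2²` modulo `q`, quadratic reciprocity gives `(q/p) = -1`.

If `p ≡ 1 (mod 4)`, reciprocity shows that a prime `q ≡ 3 (mod 4)` has `(q/p) = -1` iff `-p` is a
square mod `q`, and Dirichlet's theorem provides such a prime, possibly larger than `p`. We descend:
if `m ≡ 3 (mod 4)` and `m ∣ t² + p` with `t` even and `t < m`, then `t² + p ≡ 1 (mod 4)` forces the
cofactor to be `≡ 3 (mod 4)`, it is smaller than `m` as soon as `m ≥ p`, and `-p` is a square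
modulo it. Once `m < p`, any prime factor `q ≡ 3 (mod 4)` of `m` is the required nonresidue.
-/

theorem Nat.exists_prime_dvd_mod_four_eq_three {n : ℕ} (hn : n % 4 = 3) :
    ∃ q, q.Prime ∧ q ∣ n ∧ q % 4 = 3 := by
  induction n using induction_on_primes with
  | zero => omega
  | one => omega
  | prime_mul q a hq ih =>
    by_cases hq3 : q % 4 = 3
    · exact ⟨q, hq, dvd_mul_right q a, hq3⟩
    have ha : a % 4 = 3 := by
      rw [Nat.mul_mod] at hn
      have := Nat.mod_lt q four_pos
      have := Nat.mod_lt a four_pos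
      interval_cases q % 4 <;> interval_cases a % 4 <;> simp_all
    obtain ⟨r, hr, hra, hr3⟩ := ih ha
    exact ⟨r, hr, hra.mul_left q, hr3⟩

theorem FiniteField.isSquare_neg_iff_not_isSquare {F : Type*} [Field F] [Fintype F]
    (hF : Fintype.card F % 4 = 3) {a : F} (ha : a ≠ 0) : IsSquare (-a) ↔ ¬IsSquare a := by
  classical
  have hneg : quadraticChar F (-1) = -1 :=
    quadraticChar_neg_one_iff_not_isSquare.mpr (by rw [FiniteField.isSquare_neg_one_iff]; simpa)
  rw [← quadraticChar_one_iff_isSquare (neg_ne_zero.mpr ha),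
    ← quadraticChar_neg_one_iff_not_isSquare, neg_eq_neg_one_mul, map_mul, hneg, neg_one_mul,
    neg_eq_iff_eq_neg]

theorem ZMod.isSquare_neg_natCast_of_dvd {m t p : ℕ} (h : m ∣ t ^ 2 + p) :
    IsSquare (-(p : ZMod m)) := by
  refine ⟨t, ?_⟩
  have := (ZMod.natCast_eq_zero_iff _ _).mpr h
  push_cast at this
  linear_combination -this

theorem ZMod.exists_even_lt_dvd_sq_add {m p : ℕ} (hm : m % 2 = 1)
    (h : IsSquare (-(p : ZMod m))) : ∃ t, t % 2 = 0 ∧ t < m ∧ m ∣ t ^ 2 + p := by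
  have : NeZero m := ⟨by omega⟩
  obtain ⟨x, hx⟩ := h
  have hdvd : ∀ y : ZMod m, y * y = x * x → m ∣ y.val ^ 2 + p := fun y hy ↦ by
    rw [← ZMod.natCast_eq_zero_iff]
    push_cast
    rw [ZMod.natCast_zmod_val]
    linear_combination hy - hx
  by_cases hx2 : x.val % 2 = 0
  · exact ⟨x.val, hx2, x.val_lt, hdvd x rfl⟩
  · have hx0 : x ≠ 0 := by rintro rfl; simp at hx2
    refine ⟨(-x).val, ?_, (-x).val_lt, hdvd (-x) (neg_mul_neg x x)⟩
    rw [ZMod.neg_val, if_neg hx0]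
    have := x.val_lt
    omega

theorem exists_lt_mod_four_eq_three_isSquare_neg {p : ℕ} (hp : p % 4 = 1) (m : ℕ)
    (hm : m % 4 = 3) (hsq : IsSquare (-(p : ZMod m))) :
    ∃ m' < p, m' % 4 = 3 ∧ IsSquare (-(p : ZMod m')) := by
  induction m using Nat.strong_induction_on with
  | _ m ih =>
  rcases lt_or_ge m p with hmp | hpm
  · exact ⟨m, hmp, hm, hsq⟩
  obtain ⟨t, ht, htm, c, hc⟩ := ZMod.exists_even_lt_dvd_sq_add (by omega) hsq
  have hc4 : c % 4 = 3 := by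
    obtain ⟨k, rfl⟩ : 2 ∣ t := Nat.dvd_of_mod_eq_zero ht
    have := Nat.mul_mod m c 4
    rw [hm, ← hc] at this
    ring_nf at this
    omega
  have hcm : c < m := by
    obtain ⟨n, rfl⟩ : ∃ n, m = n + 1 := ⟨m - 1, by omega⟩
    have htn : t ≤ n := by omega
    by_contra! hmc
    nlinarith [Nat.mul_le_mul htn htn, Nat.mul_le_mul_left (n + 1) hmc, (by omega : 2 ≤ n)]
  exact ih c hcm hc4 (ZMod.isSquare_neg_natCast_of_dvd ⟨m, by rw [hc, mul_comm]⟩)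

theorem legendreSym_eq_neg_one_iff_isSquare_neg {p q : ℕ} [Fact p.Prime] [Fact q.Prime]
    (hp : p % 4 = 1) (hq : q % 4 = 3) (hpq : p ≠ q) :
    legendreSym p q = -1 ↔ IsSquare (-(p : ZMod q)) := by
  rw [legendreSym.eq_neg_one_iff', ZMod.exists_sq_eq_prime_iff_of_mod_four_eq_one hp (by omega),
    FiniteField.isSquare_neg_iff_not_isSquare (by rwa [ZMod.card])
      (ZMod.prime_ne_zero q p hpq.symm)]

theorem exists_prime_mod_four_eq_three_legendreSym_eq_neg_one {p : ℕ} [Fact p.Prime]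
    (hp2 : p ≠ 2) : ∃ q : ℕ, q.Prime ∧ q % 4 = 3 ∧ legendreSym p q = -1 := by
  obtain ⟨b, hb⟩ :=
    FiniteField.exists_nonsquare (by rwa [ZMod.ringChar_zmod_n] : ringChar (ZMod p) ≠ 2)
  have hb0 : b ≠ 0 := by rintro rfl; exact hb IsSquare.zero
  have hcop : Nat.Coprime 4 p :=
    Nat.Coprime.pow_left 2 ((Nat.coprime_primes Nat.prime_two Fact.out).mpr hp2.symm)
  let e := ZMod.chineseRemainder hcop
  have h3 : IsUnit (3 : ZMod 4) := .of_mul_eq_one 3 (by decide)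
  have hunit : IsUnit (e.symm (3, b)) := (Prod.isUnit_iff.mpr ⟨h3, hb0.isUnit⟩).map e.symm
  obtain ⟨q, -, hq, hqe⟩ := Nat.forall_exists_prime_gt_and_eq_mod hunit 0
  have hqb : e q = (3, b) := by rw [hqe, e.apply_symm_apply]
  rw [map_natCast, Prod.ext_iff] at hqb
  have hq4 : (q : ZMod 4) = 3 := by simpa using hqb.1
  have hqp : (q : ZMod p) = b := by simpa using hqb.2
  refine ⟨q, hq, ?_, (legendreSym.eq_neg_one_iff' p).mpr (hqp ▸ hb)⟩
  simpa using (ZMod.natCast_eq_natCast_iff' q 3 4).mp (by simpa using hq4)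

theorem exists_prime_lt_mod_four_eq_three_legendreSym_eq_neg_one_of_mod_four_eq_one
    {p : ℕ} [Fact p.Prime] (hp : p % 4 = 1) :
    ∃ q : ℕ, q.Prime ∧ q < p ∧ q % 4 = 3 ∧ legendreSym p q = -1 := by
  obtain ⟨Q, hQ, hQ3, hQp⟩ := exists_prime_mod_four_eq_three_legendreSym_eq_neg_one (p := p) (by omega)
  have : Fact Q.Prime := ⟨hQ⟩
  have hpQ : p ≠ Q := by rintro rfl; omega
  obtain ⟨m, hmp, hm3, hm⟩ := exists_lt_mod_four_eq_three_isSquare_neg hp Q hQ3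
    ((legendreSym_eq_neg_one_iff_isSquare_neg hp hQ3 hpQ).mp hQp)
  obtain ⟨q, hq, hqm, hq3⟩ := Nat.exists_prime_dvd_mod_four_eq_three hm3
  have : Fact q.Prime := ⟨hq⟩
  have hqp : q < p := (Nat.le_of_dvd (by omega) hqm).trans_lt hmp
  refine ⟨q, hq, hqp, hq3, (legendreSym_eq_neg_one_iff_isSquare_neg hp hq3 hqp.ne').mpr ?_⟩
  simpa only [map_neg, map_natCast] using hm.map (ZMod.castHom hqm (ZMod q))

theorem exists_prime_lt_mod_four_eq_three_legendreSym_eq_neg_one_of_mod_four_eq_three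
    {p : ℕ} [Fact p.Prime] (hp : p % 4 = 3) (hp3 : p ≠ 3) :
    ∃ q : ℕ, q.Prime ∧ q < p ∧ q % 4 = 3 ∧ legendreSym p q = -1 := by
  obtain ⟨q, hq, hqd, hq3⟩ := Nat.exists_prime_dvd_mod_four_eq_three (n := p - 4) (by omega)
  have : Fact q.Prime := ⟨hq⟩
  have hqp : q < p := by have := Nat.le_of_dvd (by omega) hqd; omega
  have hpq : (p : ZMod q) = 2 ^ 2 := by
    have := (ZMod.natCast_eq_zero_iff _ _).mpr hqd
    rw [Nat.cast_sub (by omega)] at this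
    linear_combination this
  refine ⟨q, hq, hqp, hq3, (legendreSym.eq_neg_one_iff' p).mpr ?_⟩
  rw [ZMod.exists_sq_eq_prime_iff_of_mod_four_eq_three hp hq3 hqp.ne', not_not, hpq]
  exact IsSquare.sq 2

/-- Pollack's theorem: for every prime `p ≥ 5` there is a prime `q < p` with
`q ≡ 3 (mod 4)` which is a quadratic nonresidue mod `p`. -/
theorem stmt12 (p : ℕ) (hp : p.Prime) (hp5 : 5 ≤ p) :
    ∃ q : ℕ, q.Prime ∧ q < p ∧ q % 4 = 3 ∧ @legendreSym p ⟨hp⟩ q = -1 := by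
  have : Fact p.Prime := ⟨hp⟩
  rcases Nat.odd_mod_four_iff.mp (Nat.odd_iff.mp (hp.odd_of_ne_two (by omega))) with hp1 | hp3
  · exact exists_prime_lt_mod_four_eq_three_legendreSym_eq_neg_one_of_mod_four_eq_one hp1
  · exact exists_prime_lt_mod_four_eq_three_legendreSym_eq_neg_one_of_mod_four_eq_three hp3
      (by omega)
end

section
/- Let q, k, r be distinct primes with q ≡ 3 (mod 4) and k ≡ r ≡ 1 (mod 4). Then there exist infinitely many primes w with w ≡ 3 (mod 4), (q/w) = 1, (k/w) = -1, (r/w) = -1, gcd(w, 16qkr) = 1, and gcd((w-1)/2, 16qkr) = 1. -/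
/-!
By the Chinese remainder theorem there is a class `a` modulo `4qkr` with `a ≡ 3 (mod 4)` that is a
quadratic nonresidue modulo each of `q`, `k`, `r`, and by Dirichlet's theorem it contains infinitely
many primes `w`. Quadratic reciprocity turns `(w/q) = (w/k) = (w/r) = -1` into `(q/w) = 1` and
`(k/w) = (r/w) = -1`. A nonresidue modulo `p` is neither `0` nor `1` modulo `p`, so `p` divides neither
`w` nor `w - 1`; and `w ≡ 3 (mod 4)` makes both `w` and `(w - 1)/2` odd.
-/

lemma not_dvd_of_not_isSquare {p w : ℕ} (h : ¬IsSquare (w : ZMod p)) : ¬p ∣ w := fun hdvd =>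
  h (by rw [(ZMod.natCast_eq_zero_iff w p).2 hdvd]; exact IsSquare.zero)

lemma not_dvd_sub_one_of_not_isSquare {p w : ℕ} (h : ¬IsSquare (w : ZMod p)) : ¬p ∣ w - 1 := by
  obtain _ | n := w
  · exact absurd (Nat.cast_zero (R := ZMod p) ▸ IsSquare.zero) h
  · intro hdvd
    rw [Nat.add_sub_cancel] at hdvd
    rw [Nat.cast_succ, (ZMod.natCast_eq_zero_iff n p).2 hdvd, zero_add] at h
    exact h IsSquare.one

lemma mod_four_eq_three_and_not_isSquare_of_modEq {S : Finset ℕ} {a w : ℕ}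
    (h : w ≡ a [MOD 4 * ∏ p ∈ S, p]) (ha4 : a % 4 = 3) (haS : ∀ p ∈ S, ¬IsSquare (a : ZMod p)) :
    w % 4 = 3 ∧ ∀ p ∈ S, ¬IsSquare (w : ZMod p) := by
  refine ⟨Eq.trans (h.of_dvd (dvd_mul_right 4 _)) ha4, fun p hp => ?_⟩
  have hwa := h.of_dvd (dvd_mul_of_dvd_right (Finset.dvd_prod_of_mem _ hp) 4)
  rw [(ZMod.natCast_eq_natCast_iff w a p).2 hwa]
  exact haS p hp

lemma exists_mod_four_eq_three_and_not_isSquare (S : Finset ℕ)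
    (hS : ∀ p ∈ S, p.Prime ∧ p ≠ 2) : ∃ a : ℕ, a % 4 = 3 ∧ ∀ p ∈ S, ¬IsSquare (a : ZMod p) := by
  induction S using Finset.induction_on with
  | empty => exact ⟨3, rfl, by simp⟩
  | insert p S hpS ih =>
    obtain ⟨hp, hp2⟩ := hS p (Finset.mem_insert_self p S)
    obtain ⟨a, ha4, haS⟩ := ih fun p' hp' => hS p' (Finset.mem_insert_of_mem hp')
    have := Fact.mk hp
    obtain ⟨b, hb⟩ := FiniteField.exists_nonsquare (F := ZMod p) (by rwa [ZMod.ringChar_zmod_n])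
    have hcop : Nat.Coprime (4 * ∏ p' ∈ S, p') p := by
      refine Nat.Coprime.mul_left ?_ (Nat.Coprime.prod_left fun p' hp' => ?_)
      · exact ((Nat.coprime_primes Nat.prime_two hp).2 hp2.symm).pow_left 2
      · exact (Nat.coprime_primes (hS p' (Finset.mem_insert_of_mem hp')).1 hp).2
          (by rintro rfl; exact hpS hp')
    obtain ⟨c, hca, hcb⟩ := Nat.chineseRemainder hcop a b.val
    obtain ⟨hc4, hcS⟩ := mod_four_eq_three_and_not_isSquare_of_modEq hca ha4 haS
    refine ⟨c, hc4, Finset.forall_mem_insert _ _ _ |>.2 ⟨?_, hcS⟩⟩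
    rwa [(ZMod.natCast_eq_natCast_iff _ _ _).2 hcb, ZMod.natCast_zmod_val]

theorem infinite_setOf_prime_mod_four_eq_three_and_not_isSquare (S : Finset ℕ)
    (hS : ∀ p ∈ S, p.Prime ∧ p ≠ 2) :
    {w : ℕ | w.Prime ∧ w % 4 = 3 ∧ ∀ p ∈ S, ¬IsSquare (w : ZMod p)}.Infinite := by
  obtain ⟨a, ha4, haS⟩ := exists_mod_four_eq_three_and_not_isSquare S hS
  have : NeZero (4 * ∏ p ∈ S, p) :=
    ⟨mul_ne_zero four_ne_zero (Finset.prod_ne_zero_iff.2 fun p hp => (hS p hp).1.ne_zero)⟩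
  have ha : IsUnit (a : ZMod (4 * ∏ p ∈ S, p)) := by
    rw [ZMod.isUnit_iff_coprime]
    refine Nat.Coprime.mul_right ?_ (Nat.Coprime.prod_right fun p hp => ?_)
    · exact (Nat.coprime_two_right.2 (Nat.odd_iff.2 (by omega))).pow_right 2
    · exact ((hS p hp).1.coprime_iff_not_dvd.2 (not_dvd_of_not_isSquare (haS p hp))).symm
  refine (Nat.infinite_setOfPred_prime_and_eq_mod ha).mono ?_
  rintro w ⟨hw, hwa⟩
  exact ⟨hw, mod_four_eq_three_and_not_isSquare_of_modEq
    ((ZMod.natCast_eq_natCast_iff _ _ _).1 hwa) ha4 haS⟩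

lemma legendreSym_eq_one_of_not_isSquare {p w : ℕ} [Fact p.Prime] [Fact w.Prime]
    (hp : p % 4 = 3) (hw : w % 4 = 3) (h : ¬IsSquare (w : ZMod p)) : legendreSym w p = 1 := by
  rw [legendreSym.quadratic_reciprocity_three_mod_four hp hw, (legendreSym.eq_neg_one_iff' p).2 h,
    neg_neg]

lemma legendreSym_eq_neg_one_of_not_isSquare {p w : ℕ} [Fact p.Prime] [Fact w.Prime]
    (hp : p % 4 = 1) (hw : w ≠ 2) (h : ¬IsSquare (w : ZMod p)) : legendreSym w p = -1 := by
  rw [legendreSym.quadratic_reciprocity_one_mod_four hp hw]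
  exact (legendreSym.eq_neg_one_iff' p).2 h

theorem stmt13_general (q k r : ℕ) (hq : q.Prime) (hk : k.Prime) (hr : r.Prime)
    (hq4 : q % 4 = 3) (hk4 : k % 4 = 1) (hr4 : r % 4 = 1) :
    {w : ℕ | ∃ hw : w.Prime, w % 4 = 3 ∧
      @legendreSym w ⟨hw⟩ q = 1 ∧ @legendreSym w ⟨hw⟩ k = -1 ∧
      @legendreSym w ⟨hw⟩ r = -1 ∧
      Nat.gcd w (16 * q * k * r) = 1 ∧
      Nat.gcd ((w - 1) / 2) (16 * q * k * r) = 1}.Infinite := by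
  have hS : ∀ p ∈ ({q, k, r} : Finset ℕ), p.Prime ∧ p ≠ 2 := by
    simp only [Finset.mem_insert, Finset.mem_singleton]
    rintro p (rfl | rfl | rfl) <;> exact ⟨‹_›, by omega⟩
  refine (infinite_setOf_prime_mod_four_eq_three_and_not_isSquare _ hS).mono ?_
  rintro w ⟨hw, hw4, hwS⟩
  simp only [Finset.mem_insert, Finset.mem_singleton, forall_eq_or_imp, forall_eq] at hwS
  obtain ⟨hwq, hwk, hwr⟩ := hwS
  have := Fact.mk hq; have := Fact.mk hk; have := Fact.mk hr; have := Fact.mk hw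
  have hw2 : w ≠ 2 := by omega
  have hcop (n : ℕ) (hn : Odd n) (hnq : ¬q ∣ n) (hnk : ¬k ∣ n) (hnr : ¬r ∣ n) :
      Nat.Coprime n (16 * q * k * r) :=
    (((Nat.coprime_two_right.2 hn).pow_right 4).mul_right (hq.coprime_iff_not_dvd.2 hnq).symm
      |>.mul_right (hk.coprime_iff_not_dvd.2 hnk).symm).mul_right (hr.coprime_iff_not_dvd.2 hnr).symm
  have hhalf {p : ℕ} (h : ¬IsSquare (w : ZMod p)) : ¬p ∣ (w - 1) / 2 := fun hdvd =>
    not_dvd_sub_one_of_not_isSquare h (hdvd.trans (Nat.div_dvd_of_dvd (by omega)))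
  exact ⟨hw, hw4, legendreSym_eq_one_of_not_isSquare hq4 hw4 hwq,
    legendreSym_eq_neg_one_of_not_isSquare hk4 hw2 hwk,
    legendreSym_eq_neg_one_of_not_isSquare hr4 hw2 hwr,
    hcop w (hw.odd_of_ne_two hw2) (not_dvd_of_not_isSquare hwq) (not_dvd_of_not_isSquare hwk)
      (not_dvd_of_not_isSquare hwr),
    hcop _ (Nat.odd_iff.2 (by omega)) (hhalf hwq) (hhalf hwk) (hhalf hwr)⟩

/-- For distinct primes `q ≡ 3 (mod 4)` and `k ≡ r ≡ 1 (mod 4)`, there are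
infinitely many primes `w ≡ 3 (mod 4)` with `(q/w) = 1`, `(k/w) = (r/w) = -1`,
`gcd(w, 16qkr) = 1` and `gcd((w-1)/2, 16qkr) = 1`. -/
theorem stmt13 (q k r : ℕ) (hq : q.Prime) (hk : k.Prime) (hr : r.Prime)
    (hqk : q ≠ k) (hqr : q ≠ r) (hkr : k ≠ r)
    (hq4 : q % 4 = 3) (hk4 : k % 4 = 1) (hr4 : r % 4 = 1) :
    {w : ℕ | ∃ hw : w.Prime, w % 4 = 3 ∧
      @legendreSym w ⟨hw⟩ q = 1 ∧ @legendreSym w ⟨hw⟩ k = -1 ∧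
      @legendreSym w ⟨hw⟩ r = -1 ∧
      Nat.gcd w (16 * q * k * r) = 1 ∧
      Nat.gcd ((w - 1) / 2) (16 * q * k * r) = 1}.Infinite :=
  stmt13_general q k r hq hk hr hq4 hk4 hr4
end
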